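/- arXiv:1609.06420 — 7 statements merged into one kernel-verified Lean document; each statement's English description precedes it below -/
import Mathlib

section
/- Let q be a prime power, m and d positive integers, and θ : F_{q^m} → M_m(F_q) an injective ring homomorphism. If γ_1, …, γ_d ∈ F_{q^m} are pairwise distinct, then the md×md matrix over F_q whose (s,t)-th m×m block (for s,t ∈ {1,…,d}) is θ(γ_s^{t−1}) is invertible. -/
/-!
Replacing each entry of a matrix by its image under `θ` is a ring homomorphism
`Θ : Matrix ι ι K → Matrix (ι × n) (ι × n) F`, so it maps units to units, and a Vandermonde
matrix with pairwise distinct nodes over a field is a unit.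
-/

open Matrix

def blockExpand {ι n R S : Type*} [Fintype ι] [DecidableEq ι] [Fintype n] [DecidableEq n]
    [CommRing R] [Ring S] (θ : S →+* Matrix n n R) :
    Matrix ι ι S →+* Matrix (ι × n) (ι × n) R :=
  (compRingEquiv ι n R).toRingHom.comp θ.mapMatrix

theorem isUnit_vandermonde_of_injective {K : Type*} [Field K] {d : ℕ} {γ : Fin d → K}
    (hγ : Function.Injective γ) : IsUnit (vandermonde γ) := by
  rw [isUnit_iff_isUnit_det, isUnit_iff_ne_zero]
  exact det_vandermonde_ne_zero_iff.2 hγ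

theorem stmt5_general (m d : ℕ)
    (F K : Type*) [Field F] [Field K]
    (θ : K →+* Matrix (Fin m) (Fin m) F)
    (γ : Fin d → K) (hγ : Function.Injective γ) :
    IsUnit (Matrix.of
      (fun p r : Fin d × Fin m => θ (γ p.1 ^ (r.1 : ℕ)) p.2 r.2)) :=
  (isUnit_vandermonde_of_injective hγ).map (blockExpand θ)

theorem stmt5 (q m d : ℕ) (hq : IsPrimePow q) (hm : 0 < m) (hd : 0 < d)
    (F K : Type*) [Field F] [Field K] [Fintype F] [Fintype K]
    (hF : Fintype.card F = q) (hK : Fintype.card K = q ^ m)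
    (θ : K →+* Matrix (Fin m) (Fin m) F) (hθ : Function.Injective θ)
    (γ : Fin d → K) (hγ : Function.Injective γ) :
    IsUnit (Matrix.of
      (fun p r : Fin d × Fin m => θ (γ p.1 ^ (r.1 : ℕ)) p.2 r.2)) :=
  stmt5_general m d F K θ γ hγ
end

section
/- (Exact repair for the NMBR construction.) Let q be a prime power, m, d, n positive integers with d ≤ n−1, θ : F_{q^m} → M_m(F_q) an injective ring homomorphism, and γ_1, …, γ_n pairwise distinct elements of F_{q^m}. For j ∈ {1,…,n}, let M_j = ( θ(γ_j^0) | θ(γ_j^1) | ⋯ | θ(γ_j^{d−1}) ) ∈ F_q^{m×md}. Then for every i ∈ {1,…,n}, every subset D ⊆ {1,…,n}\{i} with |D| = d, and every pair of symmetric matrices X, X' ∈ F_q^{md×md}: if M_j·X·M_iᵀ = M_j·X'·M_iᵀ for all j ∈ D, then M_i·X = M_i·X'. (Hence the content M_i·X of a failed node i is determined by the m×m downloads M_j·X·M_iᵀ from any d helper nodes.) -/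
/-!
Put `Y = X - X'` and `W = Y M_iᵀ`. The hypotheses say `M_j W = 0` for the `d` helpers `j ∈ D`.
Stacking these `d` rows gives the `md × md` matrix `θ(V)`, the image under `θ` of the `d × d`
Vandermonde matrix `V` of the distinct helper points; `V` is invertible, hence so is `θ(V)`, and
`W = 0`. Since `Y` is symmetric, `M_i Y = (Y M_iᵀ)ᵀ = Wᵀ = 0`.
-/

open Matrix

/-- The block-Vandermonde encoding row of the NMBR construction:
`nmbrRow θ g = ( θ(g^0) | θ(g^1) | ⋯ | θ(g^(d-1)) )`, an `m × md` matrix. -/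
def nmbrRow {F K : Type*} [Semiring F] [Semiring K] {m d : ℕ}
    (θ : K →+* Matrix (Fin m) (Fin m) F) (g : K) :
    Matrix (Fin m) (Fin d × Fin m) F :=
  fun a p => θ (g ^ (p.1 : ℕ)) a p.2

theorem Matrix.mul_eq_zero_of_isSymm_of_mul_transpose_eq_zero {ι κ α : Type*} [Fintype ι]
    [CommSemiring α] {Y : Matrix ι ι α} {R : Matrix κ ι α} (hY : Y.IsSymm)
    (hYR : Y * Rᵀ = 0) : R * Y = 0 := by
  rw [← transpose_eq_zero, transpose_mul, hY, hYR]

section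

variable {F K : Type*} [CommRing F] [Field K] {m d : ℕ} (θ : K →+* Matrix (Fin m) (Fin m) F)

theorem isUnit_det_compRingEquiv_mapMatrix_vandermonde {g : Fin d → K}
    (hg : Function.Injective g) :
    IsUnit (compRingEquiv (Fin d) (Fin m) F (θ.mapMatrix (vandermonde g))).det := by
  rw [← isUnit_iff_isUnit_det]
  exact (((isUnit_iff_isUnit_det _).mpr (det_vandermonde_ne_zero_iff.mpr hg).isUnit).map
    θ.mapMatrix).map _

theorem eq_zero_of_forall_nmbrRow_mul_eq_zero {ι : Type*} {g : Fin d → K}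
    (hg : Function.Injective g) {W : Matrix (Fin d × Fin m) ι F}
    (hW : ∀ k, nmbrRow (d := d) θ (g k) * W = 0) : W = 0 := by
  set S := compRingEquiv (Fin d) (Fin m) F (θ.mapMatrix (vandermonde g))
  -- the block rows of `S` are the encoding rows `nmbrRow θ (g k)`
  have hSW : S * W = 0 := by
    ext ⟨k, a⟩ b
    exact congrFun (congrFun (hW k) a) b
  have hS := isUnit_det_compRingEquiv_mapMatrix_vandermonde θ hg
  calc W = S⁻¹ * (S * W) := (nonsing_inv_mul_cancel_left S W hS).symm
    _ = 0 := by rw [hSW, Matrix.mul_zero]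

theorem eq_zero_of_forall_mem_nmbrRow_mul_eq_zero {n : ℕ} {ι : Type*}
    {γ : Fin n → K} (hγ : Function.Injective γ) {D : Finset (Fin n)} (hD : D.card = d)
    {W : Matrix (Fin d × Fin m) ι F} (hW : ∀ j ∈ D, nmbrRow (d := d) θ (γ j) * W = 0) :
    W = 0 :=
  eq_zero_of_forall_nmbrRow_mul_eq_zero θ
    (hγ.comp (Subtype.coe_injective.comp (D.orderIsoOfFin hD).injective))
    fun k => hW _ (D.orderIsoOfFin hD k).2

end

theorem stmt6_general (m d n : ℕ)
    (F K : Type*) [Field F] [Field K]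
    (θ : K →+* Matrix (Fin m) (Fin m) F)
    (γ : Fin n → K) (hγ : Function.Injective γ)
    (i : Fin n) (D : Finset (Fin n)) (hD : D.card = d)
    (X X' : Matrix (Fin d × Fin m) (Fin d × Fin m) F)
    (hX : X.IsSymm) (hX' : X'.IsSymm)
    (h : ∀ j ∈ D,
      nmbrRow (d := d) θ (γ j) * X * (nmbrRow (d := d) θ (γ i))ᵀ =
        nmbrRow (d := d) θ (γ j) * X' * (nmbrRow (d := d) θ (γ i))ᵀ) :
    nmbrRow (d := d) θ (γ i) * X = nmbrRow (d := d) θ (γ i) * X' := by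
  have hW : (X - X') * (nmbrRow (d := d) θ (γ i))ᵀ = 0 :=
    eq_zero_of_forall_mem_nmbrRow_mul_eq_zero θ hγ hD fun j hj => by
      rw [Matrix.sub_mul, Matrix.mul_sub, ← Matrix.mul_assoc, ← Matrix.mul_assoc, h j hj,
        sub_self]
  rw [← sub_eq_zero, ← Matrix.mul_sub]
  exact mul_eq_zero_of_isSymm_of_mul_transpose_eq_zero (hX.sub hX') hW

theorem stmt6 (q m d n : ℕ) (hq : IsPrimePow q) (hm : 0 < m) (hd : 0 < d)
    (hn : 0 < n) (hdn : d ≤ n - 1)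
    (F K : Type*) [Field F] [Field K] [Fintype F] [Fintype K]
    (hF : Fintype.card F = q) (hK : Fintype.card K = q ^ m)
    (θ : K →+* Matrix (Fin m) (Fin m) F) (hθ : Function.Injective θ)
    (γ : Fin n → K) (hγ : Function.Injective γ)
    (i : Fin n) (D : Finset (Fin n)) (hiD : i ∉ D) (hD : D.card = d)
    (X X' : Matrix (Fin d × Fin m) (Fin d × Fin m) F)
    (hX : X.IsSymm) (hX' : X'.IsSymm)
    (h : ∀ j ∈ D,
      nmbrRow (d := d) θ (γ j) * X * (nmbrRow (d := d) θ (γ i))ᵀ =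
        nmbrRow (d := d) θ (γ j) * X' * (nmbrRow (d := d) θ (γ i))ᵀ) :
    nmbrRow (d := d) θ (γ i) * X = nmbrRow (d := d) θ (γ i) * X' :=
  stmt6_general m d n F K θ γ hγ i D hD X X' hX hX' h
end

section
/- (Reconstruction for the NMBR construction.) Let q be a prime power, m, k, d, n positive integers with k ≤ d ≤ n−1, θ : F_{q^m} → M_m(F_q) an injective ring homomorphism, and γ_1, …, γ_n pairwise distinct elements of F_{q^m}. For j ∈ {1,…,n}, let M_j = ( θ(γ_j^0) | θ(γ_j^1) | ⋯ | θ(γ_j^{d−1}) ) ∈ F_q^{m×md}. Suppose X and X' are md×md matrices over F_q of the block form X = [[S, T],[Tᵀ, 0]] and X' = [[S', T'],[T'ᵀ, 0]], where S, S' ∈ F_q^{mk×mk} are symmetric and T, T' ∈ F_q^{mk×m(d−k)}. Then for every subset K ⊆ {1,…,n} with |K| = k: if M_j·X = M_j·X' for all j ∈ K, then S = S' and T = T'. (Hence the file is determined by the contents of any k storage nodes.) -/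
/-!
Subtracting the two encodings, each helper node `j` gives `M_j · [[S - S', T - T'], [(T - T')ᵀ, 0]] = 0`.
Because of the zero block, the last `m(d - k)` columns of this say `P_j (T - T') = 0`, where `P_j` is
the first half `(θ(γ_j^0) | ⋯ | θ(γ_j^(k-1)))` of `M_j`. Stacking the `k` rows `P_j` gives the image
under `θ` of a `k × k` Vandermonde matrix with distinct nodes, which is invertible; hence `T = T'`.
The first `mk` columns then reduce to `P_j (S - S') = 0`, and the same argument gives `S = S'`.
-/

open Matrix

/-- The block-Vandermonde encoding row of the NMBR construction, with its
columns split into a first group of `k` blocks (powers `0,…,k-1`) and a second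
group of `e = d - k` blocks (powers `k,…,d-1`):
`( θ(g^0) | ⋯ | θ(g^(k-1)) ‖ θ(g^k) | ⋯ | θ(g^(d-1)) )`. -/
def nmbrRowSplit {F E : Type*} [Semiring F] [Semiring E] {m k e : ℕ}
    (θ : E →+* Matrix (Fin m) (Fin m) F) (g : E) :
    Matrix (Fin m) ((Fin k × Fin m) ⊕ (Fin e × Fin m)) F :=
  fun a p =>
    match p with
    | Sum.inl r => θ (g ^ (r.1 : ℕ)) a r.2
    | Sum.inr r => θ (g ^ (k + (r.1 : ℕ))) a r.2

section BlockVandermonde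

variable {F E : Type*} [Semiring F] [Field E] {m k : ℕ} (θ : E →+* Matrix (Fin m) (Fin m) F)

def vandermondeRow (g : E) : Matrix (Fin m) (Fin k × Fin m) F :=
  fun a r => θ (g ^ (r.1 : ℕ)) a r.2

theorem toCols₁_nmbrRowSplit {e : ℕ} (g : E) :
    (nmbrRowSplit (k := k) (e := e) θ g).toCols₁ = vandermondeRow θ g :=
  rfl

/-- Its `(j, a)`-th row is the `a`-th row of `vandermondeRow θ (v j)`. -/
def blockVandermonde (v : Fin k → E) : Matrix (Fin k × Fin m) (Fin k × Fin m) F :=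
  compRingEquiv (Fin k) (Fin m) F (θ.mapMatrix (vandermonde v))

theorem isUnit_blockVandermonde {v : Fin k → E} (hv : Function.Injective v) :
    IsUnit (blockVandermonde θ v) := by
  have hV : IsUnit (vandermonde v) := by
    rw [isUnit_iff_isUnit_det]
    exact (det_vandermonde_ne_zero_iff.mpr hv).isUnit
  exact hV.map ((compRingEquiv (Fin k) (Fin m) F).toRingHom.comp θ.mapMatrix)

theorem eq_of_vandermondeRow_mul_eq {ι : Type*} {v : Fin k → E} (hv : Function.Injective v)
    {A B : Matrix (Fin k × Fin m) ι F}
    (h : ∀ j, vandermondeRow θ (v j) * A = vandermondeRow θ (v j) * B) : A = B := by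
  have hmul : blockVandermonde θ v * A = blockVandermonde θ v * B := by
    ext ⟨j, a⟩ c
    exact congrFun (congrFun (h j) a) c
  obtain ⟨u, hu⟩ := isUnit_blockVandermonde θ hv
  rw [← hu] at hmul
  simpa only [← Matrix.mul_assoc, u.inv_mul, Matrix.one_mul] using congrArg (u⁻¹.val * ·) hmul

end BlockVandermonde

theorem stmt7_general (m k d n : ℕ)
    (F E : Type*) [Field F] [Field E]
    (θ : E →+* Matrix (Fin m) (Fin m) F)
    (γ : Fin n → E) (hγ : Function.Injective γ)
    (S S' : Matrix (Fin k × Fin m) (Fin k × Fin m) F)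
    (T T' : Matrix (Fin k × Fin m) (Fin (d - k) × Fin m) F)
    (Kset : Finset (Fin n)) (hKset : Kset.card = k)
    (h : ∀ j ∈ Kset,
      nmbrRowSplit (k := k) (e := d - k) θ (γ j) * Matrix.fromBlocks S T Tᵀ 0 =
        nmbrRowSplit (k := k) (e := d - k) θ (γ j) * Matrix.fromBlocks S' T' T'ᵀ 0) :
    S = S' ∧ T = T' := by
  set σ := Kset.orderEmbOfFin hKset
  have hv : Function.Injective (γ ∘ σ) := hγ.comp σ.injective
  have hrow : ∀ j : Fin k,
      let M := nmbrRowSplit (k := k) (e := d - k) θ (γ (σ j))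
      vandermondeRow θ (γ (σ j)) * S + M.toCols₂ * Tᵀ =
          vandermondeRow θ (γ (σ j)) * S' + M.toCols₂ * T'ᵀ ∧
        vandermondeRow θ (γ (σ j)) * T = vandermondeRow θ (γ (σ j)) * T' := fun j => by
    have := h (σ j) (Kset.orderEmbOfFin_mem hKset j)
    rwa [← fromCols_toCols (nmbrRowSplit θ _), toCols₁_nmbrRowSplit, fromCols_mul_fromBlocks,
      fromCols_mul_fromBlocks, fromCols_ext_iff, Matrix.mul_zero, add_zero, add_zero] at this
  obtain rfl : T = T' := eq_of_vandermondeRow_mul_eq θ hv fun j => (hrow j).2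
  exact ⟨eq_of_vandermondeRow_mul_eq θ hv fun j =>
    add_right_cancel (G := Matrix (Fin m) _ F) (hrow j).1, rfl⟩

theorem stmt7 (q m k d n : ℕ) (hq : IsPrimePow q) (hm : 0 < m) (hk : 0 < k)
    (hkd : k ≤ d) (hn : 0 < n) (hdn : d ≤ n - 1)
    (F E : Type*) [Field F] [Field E] [Fintype F] [Fintype E]
    (hF : Fintype.card F = q) (hE : Fintype.card E = q ^ m)
    (θ : E →+* Matrix (Fin m) (Fin m) F) (hθ : Function.Injective θ)
    (γ : Fin n → E) (hγ : Function.Injective γ)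
    (S S' : Matrix (Fin k × Fin m) (Fin k × Fin m) F)
    (hS : S.IsSymm) (hS' : S'.IsSymm)
    (T T' : Matrix (Fin k × Fin m) (Fin (d - k) × Fin m) F)
    (Kset : Finset (Fin n)) (hKset : Kset.card = k)
    (h : ∀ j ∈ Kset,
      nmbrRowSplit (k := k) (e := d - k) θ (γ j) * Matrix.fromBlocks S T Tᵀ 0 =
        nmbrRowSplit (k := k) (e := d - k) θ (γ j) * Matrix.fromBlocks S' T' T'ᵀ 0) :
    S = S' ∧ T = T' :=
  stmt7_general m k d n F E θ γ hγ S S' T T' Kset hKset h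
end

section
/- (Exact repair for the NMSR construction, d = 2k−2.) Let q be a prime power, m, k, n positive integers with k ≥ 2, d = 2k−2 ≤ n−1, θ : F_{q^m} → M_m(F_q) an injective ring homomorphism, and γ_1, …, γ_n pairwise distinct elements of F_{q^m}. For j ∈ {1,…,n}, let Φ_j = ( θ(γ_j^0) | θ(γ_j^1) | ⋯ | θ(γ_j^{k−2}) ) ∈ F_q^{m×m(k−1)} and M_j = ( Φ_j | θ(γ_j^{k−1})·Φ_j ) ∈ F_q^{m×m(2k−2)}. Suppose X and X' are the stacked matrices X = [S_1; S_2] and X' = [S_1'; S_2'], where S_1, S_2, S_1', S_2' ∈ F_q^{m(k−1)×m(k−1)} are symmetric. Then for every ℓ ∈ {1,…,n} and every subset D ⊆ {1,…,n}\{ℓ} with |D| = d: if M_j·X·Φ_ℓᵀ = M_j·X'·Φ_ℓᵀ for all j ∈ D, then M_ℓ·X = M_ℓ·X'. (Hence the content M_ℓ·X of a failed node ℓ is determined by the m×m downloads M_j·X·Φ_ℓᵀ from any d helper nodes.) -/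
open Matrix

/-- `phiRow θ g = ( θ(g^0) | θ(g^1) | ⋯ | θ(g^(κ-1)) )`, an `m × mκ` matrix. -/
def phiRow {F E : Type*} [Semiring F] [Semiring E] {m κ : ℕ}
    (θ : E →+* Matrix (Fin m) (Fin m) F) (g : E) :
    Matrix (Fin m) (Fin κ × Fin m) F :=
  fun a p => θ (g ^ (p.1 : ℕ)) a p.2

/-- The NMSR encoding row `M_j = ( Φ_j | θ(g^(k-1))·Φ_j )` with `Φ_j = phiRow θ g`
consisting of `κ = k - 1` blocks. -/
def nmsrRow {F E : Type*} [Semiring F] [Semiring E] {m κ : ℕ}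
    (θ : E →+* Matrix (Fin m) (Fin m) F) (k : ℕ) (g : E) :
    Matrix (Fin m) ((Fin κ × Fin m) ⊕ (Fin κ × Fin m)) F :=
  Matrix.fromCols (phiRow θ g) (θ (g ^ (k - 1)) * phiRow θ g)

lemma cstar_hmul_eq {l m n α : Type*} [Fintype m] [Mul α] [AddCommMonoid α]
    (A : Matrix l m α) (B : Matrix m n α) :
    @HMul.hMul (CStarMatrix l m α) (CStarMatrix m n α) (CStarMatrix l n α) _ A B =
      (A * B : Matrix l n α) := rfl

/-- Vandermonde key lemma: if a "polynomial" with coefficients `B i` in a ring,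
evaluated through `θ` at `d` distinct points, vanishes, then all coefficients vanish. -/
lemma vand_zero {E R : Type*} [Field E] [Ring R] (θ : E →+* R) {d : ℕ}
    (x : Fin d → E) (hx : Function.Injective x) (B : Fin d → R)
    (h : ∀ j, ∑ i : Fin d, θ (x j ^ (i : ℕ)) * B i = 0) (i : Fin d) : B i = 0 := by
  classical
  set V := Matrix.vandermonde x with hV
  have hdet : IsUnit V.det := by
    rw [hV, Matrix.det_vandermonde, isUnit_iff_ne_zero]
    refine Finset.prod_ne_zero_iff.mpr fun a _ => Finset.prod_ne_zero_iff.mpr fun b hb => ?_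
    have hab : a ≠ b := ne_of_lt (Finset.mem_Ioi.mp hb)
    exact sub_ne_zero.mpr fun hxy => hab (hx hxy).symm
  have hinv : V⁻¹ * V = 1 := Matrix.nonsing_inv_mul V hdet
  have h1 : ∑ i', θ ((V⁻¹ * V) i i') * B i' = B i := by
    rw [hinv]
    simp only [Matrix.one_apply, apply_ite θ, _root_.map_one, _root_.map_zero, ite_mul, one_mul, zero_mul]
    simp
  have h2 : ∑ i', θ ((V⁻¹ * V) i i') * B i' = 0 := by
    simp only [Matrix.mul_apply, _root_.map_sum, Finset.sum_mul]
    rw [Finset.sum_comm]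
    refine Finset.sum_eq_zero fun j _ => ?_
    have hj : ∑ i', θ (V⁻¹ i j * V j i') * B i' = θ (V⁻¹ i j) * ∑ i', θ (V j i') * B i' := by
      rw [Finset.mul_sum]
      exact Finset.sum_congr rfl fun i' _ => by rw [_root_.map_mul, mul_assoc]
    rw [hj]
    have : ∑ i', θ (V j i') * B i' = 0 := by
      simpa only [hV, Matrix.vandermonde_apply] using h j
    rw [this, mul_zero]
  rw [← h1, h2]

/-- Expanding `Φ_g * A` as a sum of `θ(g^a)` times the row-blocks of `A`. -/
lemma phiRow_mul {F E : Type*} [Field F] [Field E] {m κ : ℕ}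
    (θ : E →+* Matrix (Fin m) (Fin m) F) (g : E)
    {β : Type*} [Fintype β] (A : Matrix (Fin κ × Fin m) β F) :
    (phiRow (κ := κ) θ g * A : Matrix (Fin m) β F) = ∑ a : Fin κ, θ (g ^ (a : ℕ)) * Matrix.of (fun t c => A (a, t) c) := by
  ext r c
  rw [Matrix.mul_apply, Fintype.sum_prod_type, Matrix.sum_apply]
  refine Finset.sum_congr rfl fun a _ => ?_
  rw [Matrix.mul_apply]
  rfl

theorem stmt8 (q m k n : ℕ) (hq : IsPrimePow q) (hm : 0 < m) (hk : 2 ≤ k)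
    (hn : 0 < n) (hdn : 2 * k - 2 ≤ n - 1)
    (F E : Type*) [Field F] [Field E] [Fintype F] [Fintype E]
    (hF : Fintype.card F = q) (hE : Fintype.card E = q ^ m)
    (θ : E →+* Matrix (Fin m) (Fin m) F) (hθ : Function.Injective θ)
    (γ : Fin n → E) (hγ : Function.Injective γ)
    (S₁ S₂ S₁' S₂' : Matrix (Fin (k - 1) × Fin m) (Fin (k - 1) × Fin m) F)
    (hS₁ : S₁.IsSymm) (hS₂ : S₂.IsSymm) (hS₁' : S₁'.IsSymm) (hS₂' : S₂'.IsSymm)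
    (ℓ : Fin n) (D : Finset (Fin n)) (hℓD : ℓ ∉ D) (hD : D.card = 2 * k - 2)
    (h : ∀ j ∈ D,
      nmsrRow (κ := k - 1) θ k (γ j) * Matrix.fromRows S₁ S₂ * (phiRow (κ := k - 1) θ (γ ℓ))ᵀ =
        nmsrRow (κ := k - 1) θ k (γ j) * Matrix.fromRows S₁' S₂' * (phiRow (κ := k - 1) θ (γ ℓ))ᵀ) :
    nmsrRow θ k (γ ℓ) * Matrix.fromRows S₁ S₂ =
      nmsrRow θ k (γ ℓ) * Matrix.fromRows S₁' S₂' := by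
  classical
  replace h : ∀ j ∈ D,
      (nmsrRow (κ := k - 1) θ k (γ j) * Matrix.fromRows S₁ S₂ * (phiRow (κ := k - 1) θ (γ ℓ))ᵀ :
        Matrix (Fin m) (Fin m) F) =
        nmsrRow (κ := k - 1) θ k (γ j) * Matrix.fromRows S₁' S₂' * (phiRow (κ := k - 1) θ (γ ℓ))ᵀ := h
  show (nmsrRow (κ := k - 1) θ k (γ ℓ) * Matrix.fromRows S₁ S₂ : Matrix (Fin m) _ F) =
    (nmsrRow (κ := k - 1) θ k (γ ℓ) * Matrix.fromRows S₁' S₂' : Matrix (Fin m) _ F)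
  set Φ := phiRow (κ := k - 1) θ (γ ℓ) with hΦ
  set S := S₁ - S₁' with hSdef
  set T := S₂ - S₂' with hTdef
  have hSsymm : Sᵀ = S := by
    rw [hSdef, Matrix.transpose_sub, hS₁.eq, hS₁'.eq]
  have hTsymm : Tᵀ = T := by
    rw [hTdef, Matrix.transpose_sub, hS₂.eq, hS₂'.eq]
  have hfromsub : Matrix.fromRows S₁ S₂ - Matrix.fromRows S₁' S₂' = Matrix.fromRows S T := by
    ext i c
    cases i <;> simp [Matrix.fromRows_apply_inl, Matrix.fromRows_apply_inr, hSdef, hTdef, Matrix.sub_apply]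
  -- reduce the goal to killing the difference
  rw [← sub_eq_zero, ← Matrix.mul_sub, hfromsub]
  -- reduce the hypothesis similarly
  have h0 : ∀ j ∈ D, nmsrRow (κ := k - 1) θ k (γ j) * Matrix.fromRows S T * Φᵀ = (0 : Matrix (Fin m) (Fin m) F) := by
    intro j hj
    rw [← hfromsub, Matrix.mul_sub, Matrix.sub_mul, h j hj, sub_self]
  -- row blocks of S * Φᵀ and T * Φᵀ
  set Bl : Fin (k - 1) → Matrix (Fin m) (Fin m) F :=
    fun a => Matrix.of (fun t c => (S * Φᵀ) (a, t) c) with hBl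
  set Br : Fin (k - 1) → Matrix (Fin m) (Fin m) F :=
    fun a => Matrix.of (fun t c => (T * Φᵀ) (a, t) c) with hBr
  set B : Fin ((k - 1) + (k - 1)) → Matrix (Fin m) (Fin m) F :=
    fun i => Sum.elim Bl Br (finSumFinEquiv.symm i) with hB
  -- the key expansion of the download matrix as a block polynomial
  have key : ∀ g : E, ∑ i : Fin ((k - 1) + (k - 1)), θ (g ^ (i : ℕ)) * B i
      = nmsrRow (κ := k - 1) θ k g * Matrix.fromRows S T * Φᵀ := by
    intro g
    have expand : nmsrRow (κ := k - 1) θ k g * Matrix.fromRows S T * Φᵀ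
        = (∑ a : Fin (k - 1), θ (g ^ (a : ℕ)) * Bl a)
          + ∑ a : Fin (k - 1), θ (g ^ ((a : ℕ) + (k - 1))) * Br a := by
      rw [nmsrRow, Matrix.fromCols_mul_fromRows, Matrix.add_mul,
        Matrix.mul_assoc (phiRow θ g) S Φᵀ,
        Matrix.mul_assoc (θ (g ^ (k - 1))) (phiRow θ g) T,
        Matrix.mul_assoc (θ (g ^ (k - 1))) (phiRow θ g * T) Φᵀ,
        Matrix.mul_assoc (phiRow θ g) T Φᵀ,
        phiRow_mul θ g (S * Φᵀ), phiRow_mul θ g (T * Φᵀ), Finset.mul_sum]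
      congr 1
      refine Finset.sum_congr rfl fun a _ => ?_
      rw [← Matrix.mul_assoc, ← _root_.map_mul, ← pow_add, Nat.add_comm (k - 1) (a : ℕ)]
    rw [expand, ← Equiv.sum_comp finSumFinEquiv
      (fun i => θ (g ^ (i : ℕ)) * B i), Fintype.sum_sum_type]
    simp only [hB, Equiv.symm_apply_apply, Sum.elim_inl, Sum.elim_inr,
      finSumFinEquiv_apply_left, finSumFinEquiv_apply_right,
      finSumFinEquiv_symm_apply_castAdd, finSumFinEquiv_symm_apply_natAdd,
      Fin.coe_castAdd, Fin.coe_natAdd, Fin.coe_addNat, Nat.add_comm (k - 1)]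
  -- reindex D by Fin ((k-1)+(k-1))
  have hcard : D.card = (k - 1) + (k - 1) := by omega
  let e : {x // x ∈ D} ≃ Fin ((k - 1) + (k - 1)) := D.equivFinOfCardEq hcard
  set x : Fin ((k - 1) + (k - 1)) → E := fun i => γ ((e.symm i : Fin n)) with hx
  have hxinj : Function.Injective x :=
    hγ.comp (Subtype.val_injective.comp e.symm.injective)
  have hBzero : ∀ i, B i = 0 := by
    refine vand_zero θ x hxinj B fun j => ?_
    rw [key (x j)]
    exact h0 _ (e.symm j).2
  have hBl0 : ∀ a, Bl a = 0 := fun a => by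
    have := hBzero (finSumFinEquiv (Sum.inl a))
    simpa only [hB, Equiv.symm_apply_apply, Sum.elim_inl] using this
  have hBr0 : ∀ a, Br a = 0 := fun a => by
    have := hBzero (finSumFinEquiv (Sum.inr a))
    simpa only [hB, Equiv.symm_apply_apply, Sum.elim_inr] using this
  have hSΦ : S * Φᵀ = 0 := by
    ext p c
    have := congrFun (congrFun (hBl0 p.1) p.2) c
    simpa [hBl] using this
  have hTΦ : T * Φᵀ = 0 := by
    ext p c
    have := congrFun (congrFun (hBr0 p.1) p.2) c
    simpa [hBr] using this
  have hΦS : Φ * S = 0 := by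
    have : (S * Φᵀ)ᵀ = Φ * Sᵀ := by rw [Matrix.transpose_mul, Matrix.transpose_transpose]
    rw [← hSsymm, ← this, hSΦ, Matrix.transpose_zero]
  have hΦT : Φ * T = 0 := by
    have : (T * Φᵀ)ᵀ = Φ * Tᵀ := by rw [Matrix.transpose_mul, Matrix.transpose_transpose]
    rw [← hTsymm, ← this, hTΦ, Matrix.transpose_zero]
  rw [nmsrRow, Matrix.fromCols_mul_fromRows, ← hΦ,
    Matrix.mul_assoc (θ (γ ℓ ^ (k - 1))) Φ T, hΦS, hΦT, Matrix.mul_zero, add_zero]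
end

section
/- (Reconstruction for the NMSR construction, d = 2k−2.) Let q be a prime power, m, k, n positive integers with k ≥ 2 and 2k−2 ≤ n−1. Let g = gcd(k−1, q^m−1), let γ be a primitive element of F_{q^m} (an element of multiplicative order q^m−1), and let i_1, …, i_n ∈ {0, 1, …, (q^m−1)/g − 1} be integers no two of which lie in the same q-cyclotomic coset modulo (q^m−1)/g. Let θ : F_{q^m} → M_m(F_q) be an injective F_q-algebra homomorphism, set γ_j = γ^{i_j}, and for j ∈ {1,…,n} let Φ_j = ( θ(γ_j^0) | ⋯ | θ(γ_j^{k−2}) ) and M_j = ( Φ_j | θ(γ_j^{k−1})·Φ_j ). Suppose X = [S_1; S_2] and X' = [S_1'; S_2'], where S_1, S_2, S_1', S_2' ∈ F_q^{m(k−1)×m(k−1)} are symmetric. Then for every subset K ⊆ {1,…,n} with |K| = k: if M_j·X = M_j·X' for all j ∈ K, then S_1 = S_1' and S_2 = S_2'. (Hence the file is determined by the contents of any k storage nodes.) -/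
/-!
Put `D₁ = S₁ - S₁'`, `D₂ = S₂ - S₂'` and `eⱼ = γⱼ ^ (k - 1)`, so that `Φⱼ D₁ + θ(eⱼ) Φⱼ D₂ = 0`
for `j ∈ K`. Multiplying the relation for `j` on the right by `Φⱼ'ᵀ` and comparing it with the
transpose of the relation for `j'` (the `Dᵢ` are symmetric) gives the Sylvester equation
`θ(eⱼ) X = X θ(eⱼ')ᵀ` for `X = Φⱼ D₂ Φⱼ'ᵀ`. The cyclotomic coset condition says that `eⱼ'` is
not a Frobenius conjugate `eⱼ ^ q ^ r`, i.e. not a root of the minimal polynomial `p` of `eⱼ`;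
then `p(θ(eⱼ)) = 0` while `p(θ(eⱼ')ᵀ)` is invertible, so `X = 0`. Any `k - 1` of the `γⱼ` are
distinct, and the block Vandermonde matrix they form is invertible, so `Φⱼ Y = 0` for `k - 1`
indices `j` forces `Y = 0`. This gives `D₂ Φⱼ'ᵀ = 0`, hence `Φⱼ' D₂ = 0` for all `j' ∈ K`,
hence `D₂ = 0`, and then `D₁ = 0`.
-/

open Matrix

/-- The `q`-cyclotomic coset of `s` modulo `m'`, as a subset of `ZMod m'`. -/
def cyclotomicCoset (q m' s : ℕ) : Set (ZMod m') :=
  {x : ZMod m' | ∃ r : ℕ, x = (s : ZMod m') * (q : ZMod m') ^ r}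

open Polynomial

theorem nmsrRow_mul_fromRows {F E : Type*} [Semiring F] [Semiring E] {m κ : ℕ}
    (θ : E →+* Matrix (Fin m) (Fin m) F) (k : ℕ) (g : E) {ι : Type*}
    (A B : Matrix (Fin κ × Fin m) ι F) :
    nmsrRow θ k g * fromRows A B = phiRow θ g * A + θ (g ^ (k - 1)) * phiRow θ g * B :=
  fromCols_mul_fromRows _ _ _ _

theorem eq_zero_of_forall_phiRow_mul_eq_zero {F E : Type*} [Field F] [Field E] {m κ : ℕ}
    (θ : E →+* Matrix (Fin m) (Fin m) F)
    {ι ι' : Type*} {K : Finset ι} (hK : κ ≤ K.card) {v : ι → E} (hv : Set.InjOn v K)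
    (Y : Matrix (Fin κ × Fin m) ι' F) (hY : ∀ j ∈ K, phiRow (κ := κ) θ (v j) * Y = 0) : Y = 0 := by
  classical
  let e : Fin κ ↪ K := (Fin.castLEEmb hK).trans K.equivFin.symm.toEmbedding
  -- the block Vandermonde matrix, whose rows `(r, _)` are those of `phiRow θ (v (e r))`
  let W : Matrix (Fin κ × Fin m) (Fin κ × Fin m) F :=
    Matrix.compRingEquiv _ _ F ((vandermonde fun r => v (e r)).map θ)
  have hW : IsUnit W := by
    refine (IsUnit.map _ (IsUnit.map θ.mapMatrix ?_))
    rw [isUnit_iff_isUnit_det, isUnit_iff_ne_zero, det_vandermonde_ne_zero_iff]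
    exact fun r s hrs => e.injective (Subtype.ext (hv (e r).2 (e s).2 hrs))
  have hWY : W * Y = 0 := by
    ext ⟨r, x⟩ c
    exact congrFun (congrFun (hY _ (e r).2) x) c
  obtain ⟨u, hu⟩ := hW
  calc Y = (↑u⁻¹ : Matrix (Fin κ × Fin m) (Fin κ × Fin m) F) * (W * Y) := by
        rw [← Matrix.mul_assoc, ← hu, Units.inv_mul, Matrix.one_mul]
    _ = 0 := by rw [hWY, Matrix.mul_zero]

theorem Matrix.aeval_transpose {R ι : Type*} [CommSemiring R] [Fintype ι] [DecidableEq ι]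
    (A : Matrix ι ι R) (p : R[X]) : aeval Aᵀ p = (aeval A p)ᵀ := by
  apply MulOpposite.op_injective
  rw [← aeval_op_apply]
  exact aeval_algHom_apply (transposeAlgEquiv ι R R).toAlgHom A p

theorem Matrix.aeval_mul_eq_mul_aeval_of_mul_eq_mul {R m n : Type*} [CommSemiring R] [Fintype m]
    [DecidableEq m] [Fintype n] [DecidableEq n] {A : Matrix m m R} {B : Matrix n n R}
    {X : Matrix m n R} (h : A * X = X * B) (p : R[X]) : aeval A p * X = X * aeval B p := by
  induction p using Polynomial.induction_on' with
  | add p q hp hq => simp only [map_add, Matrix.add_mul, Matrix.mul_add, hp, hq]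
  | monomial i c =>
    have hpow : A ^ i * X = X * B ^ i := by
      induction i with
      | zero => simp
      | succ i ih => rw [pow_succ, pow_succ, Matrix.mul_assoc, h, ← Matrix.mul_assoc, ih,
          Matrix.mul_assoc]
    simp only [aeval_monomial, Algebra.algebraMap_eq_smul_one, Matrix.smul_mul, Matrix.mul_smul,
      Matrix.one_mul, hpow]

theorem Matrix.eq_zero_of_mul_eq_mul_of_aeval {R m n : Type*} [CommSemiring R] [Fintype m]
    [DecidableEq m] [Fintype n] [DecidableEq n] {A : Matrix m m R} {B : Matrix n n R}
    {X : Matrix m n R} (h : A * X = X * B) {p : R[X]} (hA : aeval A p = 0)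
    (hB : IsUnit (aeval B p)) : X = 0 := by
  have : X * aeval B p = 0 := by
    rw [← aeval_mul_eq_mul_aeval_of_mul_eq_mul h, hA, Matrix.zero_mul]
  obtain ⟨u, hu⟩ := hB
  calc X = X * aeval B p * (↑u⁻¹ : Matrix n n R) := by
        rw [← hu, Matrix.mul_assoc, Units.mul_inv, Matrix.mul_one]
    _ = 0 := by rw [this, Matrix.zero_mul]

theorem Matrix.mul_cross_eq_cross_mul_transpose {R a n : Type*} [CommRing R] [Fintype a]
    [Fintype n] {P Q : Matrix a n R} {A B : Matrix a a R} {D₁ D₂ : Matrix n n R}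
    (hD₁ : D₁.IsSymm) (hD₂ : D₂.IsSymm) (hP : P * D₁ + A * P * D₂ = 0)
    (hQ : Q * D₁ + B * Q * D₂ = 0) :
    A * (P * D₂ * Qᵀ) = P * D₂ * Qᵀ * Bᵀ := by
  have hPQ : P * D₁ * Qᵀ + A * (P * D₂ * Qᵀ) = 0 := by
    simpa only [Matrix.add_mul, Matrix.mul_assoc, Matrix.zero_mul] using congrArg (· * Qᵀ) hP
  have hQP : P * D₁ * Qᵀ + P * D₂ * Qᵀ * Bᵀ = 0 := by
    simpa only [transpose_add, transpose_mul, hD₁.eq, hD₂.eq, transpose_zero, Matrix.mul_add,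
      Matrix.mul_assoc, Matrix.mul_zero] using congrArg (fun M => P * Mᵀ) hQ
  exact add_left_cancel (hPQ.trans hQP.symm)

section Reconstruction

variable {F E : Type*} [Field F] [Field E] [Algebra F E] {m κ : ℕ}

theorem eq_zero_of_forall_phiRow_mul_add_eq_zero (θ : E →ₐ[F] Matrix (Fin m) (Fin m) F)
    {ι : Type*} {K : Finset ι} (hK : κ ≤ K.card - 1) {v : ι → E} {e : ℕ}
    (hconj : ∀ j ∈ K, ∀ j' ∈ K, j ≠ j' → aeval (v j' ^ e) (minpoly F (v j ^ e)) ≠ 0)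
    {D₁ D₂ : Matrix (Fin κ × Fin m) (Fin κ × Fin m) F} (hD₁ : D₁.IsSymm) (hD₂ : D₂.IsSymm)
    (h : ∀ j ∈ K, phiRow (κ := κ) θ.toRingHom (v j) * D₁ +
      θ (v j ^ e) * phiRow (κ := κ) θ.toRingHom (v j) * D₂ = 0) :
    D₁ = 0 ∧ D₂ = 0 := by
  classical
  have hv : Set.InjOn v K := fun j hj j' hj' hjj' => by
    by_contra hne
    exact hconj j hj j' hj' hne (by rw [hjj']; exact minpoly.aeval F _)
  have hcross : ∀ j ∈ K, ∀ j' ∈ K, j ≠ j' →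
      phiRow (κ := κ) θ.toRingHom (v j) * D₂ * (phiRow (κ := κ) θ.toRingHom (v j'))ᵀ = 0 := by
    intro j hj j' hj' hjj'
    refine eq_zero_of_mul_eq_mul_of_aeval
      (mul_cross_eq_cross_mul_transpose hD₁ hD₂ (h j hj) (h j' hj')) (p := minpoly F (v j ^ e))
      (by rw [aeval_algHom_apply, minpoly.aeval, map_zero]) ?_
    rw [aeval_transpose, aeval_algHom_apply, isUnit_transpose]
    exact (isUnit_iff_ne_zero.2 (hconj j hj j' hj' hjj')).map θ
  have hD₂Φ : ∀ j' ∈ K, D₂ * (phiRow (κ := κ) θ.toRingHom (v j'))ᵀ = 0 := fun j' hj' =>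
    eq_zero_of_forall_phiRow_mul_eq_zero θ.toRingHom
      (by rwa [Finset.card_erase_of_mem hj']) (hv.mono (Finset.erase_subset j' K)) _
      fun j hj => by
        rw [← Matrix.mul_assoc]
        exact hcross j (Finset.mem_of_mem_erase hj) j' hj' (Finset.ne_of_mem_erase hj)
  have hΦD₂ : ∀ j ∈ K, phiRow (κ := κ) θ.toRingHom (v j) * D₂ = 0 := fun j hj => by
    simpa only [transpose_mul, transpose_transpose, hD₂.eq, transpose_zero] using
      congrArg transpose (hD₂Φ j hj)
  have hD₂0 : D₂ = 0 := eq_zero_of_forall_phiRow_mul_eq_zero θ.toRingHom (by omega) hv _ hΦD₂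
  refine ⟨eq_zero_of_forall_phiRow_mul_eq_zero θ.toRingHom (by omega) hv _ fun j hj => ?_, hD₂0⟩
  simpa only [hD₂0, Matrix.mul_zero, add_zero] using h j hj

theorem eq_of_forall_nmsrRow_mul_fromRows_eq (θ : E →ₐ[F] Matrix (Fin m) (Fin m) F)
    {ι : Type*} {K : Finset ι} (hK : κ ≤ K.card - 1) {v : ι → E} {k : ℕ}
    (hconj : ∀ j ∈ K, ∀ j' ∈ K, j ≠ j' →
      aeval (v j' ^ (k - 1)) (minpoly F (v j ^ (k - 1))) ≠ 0)
    {S₁ S₂ S₁' S₂' : Matrix (Fin κ × Fin m) (Fin κ × Fin m) F}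
    (hS₁ : S₁.IsSymm) (hS₂ : S₂.IsSymm) (hS₁' : S₁'.IsSymm) (hS₂' : S₂'.IsSymm)
    (h : ∀ j ∈ K, nmsrRow θ.toRingHom k (v j) * fromRows S₁ S₂ =
      nmsrRow θ.toRingHom k (v j) * fromRows S₁' S₂') :
    S₁ = S₁' ∧ S₂ = S₂' := by
  simpa only [sub_eq_zero] using eq_zero_of_forall_phiRow_mul_add_eq_zero θ hK hconj
    (hS₁.sub hS₁') (hS₂.sub hS₂') fun j hj => by
      have hj := h j hj
      rw [nmsrRow_mul_fromRows, nmsrRow_mul_fromRows] at hj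
      rw [Matrix.mul_sub, Matrix.mul_sub, sub_add_sub_comm]
      exact sub_eq_zero.mpr hj

end Reconstruction

theorem cyclotomicCoset_eq_of_natCast_eq_mul_pow {q m' s t r e : ℕ} (he : 0 < e)
    (hqe : (q : ZMod m') ^ e = 1) (h : (t : ZMod m') = s * q ^ r) :
    cyclotomicCoset q m' s = cyclotomicCoset q m' t := by
  obtain ⟨e, rfl⟩ : ∃ e', e = e' + 1 := ⟨e - 1, by omega⟩
  ext x
  constructor
  · rintro ⟨w, rfl⟩
    refine ⟨w + r * e, ?_⟩
    rw [h, mul_assoc, ← pow_add, show r + (w + r * e) = w + r * (e + 1) by ring, pow_add,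
      pow_mul', hqe, one_pow, mul_one]
  · rintro ⟨w, rfl⟩
    exact ⟨r + w, by rw [h, mul_assoc, ← pow_add]⟩

theorem natCast_eq_of_pow_mul_eq_pow_mul {G : Type*} [Monoid G] {γ : G} (hγ : 0 < orderOf γ)
    {c a b : ℕ} (h : γ ^ (c * a) = γ ^ (c * b)) :
    (a : ZMod (orderOf γ / Nat.gcd c (orderOf γ))) = b := by
  rw [ZMod.natCast_eq_natCast_iff, Nat.gcd_comm]
  exact ((orderOf_pos_iff.mp hγ).pow_eq_pow_iff_modEq.mp h).cancel_left_div_gcd hγ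

theorem exists_eq_pow_card_pow_of_aeval_minpoly_eq_zero {F E : Type*} [Field F] [Fintype F]
    [Field E] [Finite E] [Algebra F E] {a b : E} (hb : aeval b (minpoly F a) = 0) :
    ∃ r : ℕ, b = a ^ Fintype.card F ^ r := by
  have ha : IsIntegral F a := .of_finite F a
  have hmin : minpoly F a = minpoly F b :=
    minpoly.eq_of_irreducible_of_monic (minpoly.irreducible ha) hb (minpoly.monic ha)
  obtain ⟨σ, rfl⟩ := (Normal.minpoly_eq_iff_mem_orbit (F := F) (E := E)).mp hmin.symm
  obtain ⟨r, rfl⟩ := (FiniteField.bijective_frobeniusAlgEquivOfAlgebraic_pow F E).2 σ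
  refine ⟨r, ?_⟩
  show ((FiniteField.frobeniusAlgEquivOfAlgebraic F E) ^ (r : ℕ)) a = _
  rw [AlgEquiv.coe_pow, FiniteField.coe_frobeniusAlgEquivOfAlgebraic_iterate]

theorem aeval_pow_pow_minpoly_ne_zero {F E : Type*} [Field F] [Fintype F] [Field E] [Finite E]
    [Algebra F E] {m : ℕ} (hm : 0 < m) {γ : E} (hγ : orderOf γ = Fintype.card F ^ m - 1)
    {c s t : ℕ}
    (hst : cyclotomicCoset (Fintype.card F)
        ((Fintype.card F ^ m - 1) / Nat.gcd c (Fintype.card F ^ m - 1)) s ≠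
      cyclotomicCoset (Fintype.card F)
        ((Fintype.card F ^ m - 1) / Nat.gcd c (Fintype.card F ^ m - 1)) t) :
    aeval ((γ ^ t) ^ c) (minpoly F ((γ ^ s) ^ c)) ≠ 0 := by
  intro hroot
  obtain ⟨r, hr⟩ := exists_eq_pow_card_pow_of_aeval_minpoly_eq_zero hroot
  set q := Fintype.card F
  have hqm : 1 < q ^ m := Nat.one_lt_pow hm.ne' Fintype.one_lt_card
  have hts := natCast_eq_of_pow_mul_eq_pow_mul (by omega : 0 < orderOf γ) (c := c) (a := t)
    (b := s * q ^ r) (by rw [mul_comm c t, pow_mul, hr, ← pow_mul, ← pow_mul]; ring_nf)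
  rw [hγ, Nat.cast_mul, Nat.cast_pow] at hts
  refine hst (cyclotomicCoset_eq_of_natCast_eq_mul_pow hm ?_ hts)
  have hdvd := (ZMod.natCast_eq_zero_iff _ _).2
    (Nat.div_dvd_of_dvd (Nat.gcd_dvd_right c (q ^ m - 1)))
  rwa [Nat.cast_sub hqm.le, sub_eq_zero, Nat.cast_pow, Nat.cast_one] at hdvd

theorem stmt9_general (q m k n : ℕ) (hm : 0 < m)
    (F E : Type*) [Field F] [Field E] [Fintype F] [Fintype E] [Algebra F E]
    (hF : Fintype.card F = q)
    (θ : E →ₐ[F] Matrix (Fin m) (Fin m) F)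
    (γ : E) (hγ : orderOf γ = q ^ m - 1)
    (idx : Fin n → ℕ)
    (hcosets : ∀ j j' : Fin n, j ≠ j' →
      cyclotomicCoset q ((q ^ m - 1) / Nat.gcd (k - 1) (q ^ m - 1)) (idx j) ≠
        cyclotomicCoset q ((q ^ m - 1) / Nat.gcd (k - 1) (q ^ m - 1)) (idx j'))
    (S₁ S₂ S₁' S₂' : Matrix (Fin (k - 1) × Fin m) (Fin (k - 1) × Fin m) F)
    (hS₁ : S₁.IsSymm) (hS₂ : S₂.IsSymm) (hS₁' : S₁'.IsSymm) (hS₂' : S₂'.IsSymm)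
    (Kset : Finset (Fin n)) (hKset : Kset.card = k)
    (h : ∀ j ∈ Kset,
      nmsrRow θ.toRingHom k (γ ^ idx j) * Matrix.fromRows S₁ S₂ =
        nmsrRow θ.toRingHom k (γ ^ idx j) * Matrix.fromRows S₁' S₂') :
    S₁ = S₁' ∧ S₂ = S₂' := by
  subst hF
  exact eq_of_forall_nmsrRow_mul_fromRows_eq θ (K := Kset) (by omega)
    (fun j _ j' _ hjj' => aeval_pow_pow_minpoly_ne_zero hm hγ (hcosets j j' hjj'))
    hS₁ hS₂ hS₁' hS₂' h

theorem stmt9 (q m k n : ℕ) (hq : IsPrimePow q) (hm : 0 < m) (hk : 2 ≤ k)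
    (hn : 0 < n) (hdn : 2 * k - 2 ≤ n - 1)
    (F E : Type*) [Field F] [Field E] [Fintype F] [Fintype E] [Algebra F E]
    (hF : Fintype.card F = q) (hE : Fintype.card E = q ^ m)
    (θ : E →ₐ[F] Matrix (Fin m) (Fin m) F) (hθ : Function.Injective θ)
    (γ : E) (hγ : orderOf γ = q ^ m - 1)
    (idx : Fin n → ℕ)
    (hidx : ∀ j, idx j < (q ^ m - 1) / Nat.gcd (k - 1) (q ^ m - 1))
    (hcosets : ∀ j j' : Fin n, j ≠ j' →
      cyclotomicCoset q ((q ^ m - 1) / Nat.gcd (k - 1) (q ^ m - 1)) (idx j) ≠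
        cyclotomicCoset q ((q ^ m - 1) / Nat.gcd (k - 1) (q ^ m - 1)) (idx j'))
    (S₁ S₂ S₁' S₂' : Matrix (Fin (k - 1) × Fin m) (Fin (k - 1) × Fin m) F)
    (hS₁ : S₁.IsSymm) (hS₂ : S₂.IsSymm) (hS₁' : S₁'.IsSymm) (hS₂' : S₂'.IsSymm)
    (Kset : Finset (Fin n)) (hKset : Kset.card = k)
    (h : ∀ j ∈ Kset,
      nmsrRow θ.toRingHom k (γ ^ idx j) * Matrix.fromRows S₁ S₂ =
        nmsrRow θ.toRingHom k (γ ^ idx j) * Matrix.fromRows S₁' S₂') :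
    S₁ = S₁' ∧ S₂ = S₂' :=
  stmt9_general q m k n hm F E hF θ γ hγ idx hcosets S₁ S₂ S₁' S₂' hS₁ hS₂ hS₁' hS₂' Kset hKset h
end

section
/- Let F ⊆ K ⊆ L be a tower of fields, let d be a positive integer, and let v_1, …, v_d ∈ L be linearly independent over K. Let u be a positive integer with u ≤ d, let γ_1, …, γ_u ∈ K be pairwise distinct, and for i ∈ {1,…,u} define β_i = Σ_{j=1}^{u} γ_i^{j−1}·v_j ∈ L and the F-subspace V_i = β_i·K = { β_i·c : c ∈ K } of L (L regarded as an F-vector space). Then the family of F-subspaces V_1, …, V_u is independent: their sum V_1 + ⋯ + V_u is an internal direct sum (equivalently, for every i, V_i ∩ Σ_{j≠i} V_j = {0}). -/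
/-!
The Vandermonde matrix of distinct nodes is invertible, so the `β i` are obtained from the
`K`-linearly independent `v j` by an invertible change of coordinates and are themselves
`K`-linearly independent. Hence the lines `K ∙ β i` are independent `K`-subspaces, and
`V i` is just `K ∙ β i` viewed as an `F`-subspace; restriction of scalars is a complete
lattice homomorphism, and such maps preserve independence.
-/

theorem iSupIndep.map_completeLatticeHom {ι : Sort*} {α β : Type*} [CompleteLattice α]
    [CompleteLattice β] {t : ι → α} (ht : iSupIndep t) (f : CompleteLatticeHom α β) :
    iSupIndep (f ∘ t) := by
  intro i
  rw [disjoint_iff]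
  simp only [Function.comp_apply, ← map_iSup, ← map_inf, (ht i).eq_bot, map_bot]

theorem LinearIndependent.sum_smul_of_isUnit {R M ι : Type*} [CommSemiring R] [AddCommMonoid M]
    [Module R M] [Fintype ι] [DecidableEq ι] {v : ι → M} (hv : LinearIndependent R v)
    {A : Matrix ι ι R} (hA : IsUnit A) : LinearIndependent R fun i => ∑ j, A i j • v j := by
  have hinj := linearIndependent_iff_injective_fintypeLinearCombination.mp hv
  convert (A.linearIndependent_rows_of_isUnit hA).map_injOn _ hinj.injOn using 1
  ext i
  simp [Fintype.linearCombination_apply]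

theorem LinearIndependent.vandermonde_sum_smul {K M : Type*} [Field K] [AddCommMonoid M]
    [Module K M] {n : ℕ} {v : Fin n → M} (hv : LinearIndependent K v) {γ : Fin n → K}
    (hγ : Function.Injective γ) : LinearIndependent K fun i => ∑ j : Fin n, γ i ^ (j : ℕ) • v j :=
  hv.sum_smul_of_isUnit <| (Matrix.isUnit_iff_isUnit_det _).mpr
    (Matrix.det_vandermonde_ne_zero_iff.mpr hγ).isUnit

theorem LinearMap.range_mulLeft_comp_toAlgHom (F K L : Type*) [CommSemiring F] [CommSemiring K]
    [CommSemiring L] [Algebra F K] [Algebra K L] [Algebra F L] [IsScalarTower F K L] (b : L) :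
    LinearMap.range ((LinearMap.mulLeft F b).comp (IsScalarTower.toAlgHom F K L).toLinearMap) =
      (K ∙ b).restrictScalars F := by
  ext x
  simp [Submodule.mem_span_singleton, Algebra.smul_def, mul_comm]

theorem stmt13_general (F K L : Type*) [Field F] [Field K] [Field L]
    [Algebra F K] [Algebra K L] [Algebra F L] [IsScalarTower F K L]
    (d : ℕ) (v : Fin d → L) (hv : LinearIndependent K v)
    (u : ℕ) (hud : u ≤ d)
    (γ : Fin u → K) (hγ : Function.Injective γ) :
    -- `V i = β_i · K` as an `F`-subspace of `L`, where
    -- `β_i = ∑_j γ_i^(j-1) • v_j`; the family `V` is independent.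
    iSupIndep (fun i : Fin u =>
      LinearMap.range ((LinearMap.mulLeft F
          (∑ j : Fin u, γ i ^ (j : ℕ) • v (Fin.castLE hud j))).comp
        (IsScalarTower.toAlgHom F K L).toLinearMap)) := by
  have hβ := (hv.comp _ (Fin.castLE_injective hud)).vandermonde_sum_smul hγ
  simp only [LinearMap.range_mulLeft_comp_toAlgHom]
  exact hβ.iSupIndep_span_singleton.map_completeLatticeHom
    (Submodule.restrictScalarsLatticeHom F K L)

theorem stmt13 (F K L : Type*) [Field F] [Field K] [Field L]
    [Algebra F K] [Algebra K L] [Algebra F L] [IsScalarTower F K L]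
    (d : ℕ) (hd : 0 < d) (v : Fin d → L) (hv : LinearIndependent K v)
    (u : ℕ) (hu : 0 < u) (hud : u ≤ d)
    (γ : Fin u → K) (hγ : Function.Injective γ) :
    -- `V i = β_i · K` as an `F`-subspace of `L`, where
    -- `β_i = ∑_j γ_i^(j-1) • v_j`; the family `V` is independent.
    iSupIndep (fun i : Fin u =>
      LinearMap.range ((LinearMap.mulLeft F
          (∑ j : Fin u, γ i ^ (j : ℕ) • v (Fin.castLE hud j))).comp
        (IsScalarTower.toAlgHom F K L).toLinearMap)) :=
  stmt13_general F K L d v hv u hud γ hγ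
end

section
/- Let q be a prime power and b, k, n positive integers with k dividing b and k ≤ n. Suppose U_1, …, U_n are F_q-subspaces of F_q^b, each of dimension b/k, forming an every-k independent set: for every subset T ⊆ {1,…,n} with |T| = k, dim(Σ_{t∈T} U_t) = b. Then there exists an injective F_q-linear map f : F_q^b → (F_q^{b/k})^n such that for every subset J ⊆ {1,…,n} with |J| = k, the F_q-linear map x ↦ (f(x)_j)_{j∈J} from F_q^b to (F_q^{b/k})^k is injective (equivalently bijective); that is, the image of f is an F_q-linear code of length n over the alphabet F_q^{b/k} with q^b codewords in which any k coordinates determine the codeword, i.e., an [n,k] MDS code over F_{q^{b/k}} linear over F_q. -/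
/-!
Pair `x ∈ F_q^b` against a basis of each `U_i` to obtain its `i`-th code symbol in `F_q^{b/k}`.
If two vectors agree on the symbols indexed by `J`, their difference is orthogonal to every `U_j`
with `j ∈ J`, hence to `∑_{j ∈ J} U_j`, which is all of `F_q^b` when `|J| = k`; so it vanishes.
-/

open Matrix

section

variable {K ι κ m : Type*} [CommSemiring K] [Fintype m] {U : ι → Submodule K (m → K)}

noncomputable def dotProductCode (u : ∀ i, Module.Basis κ K (U i)) : (m → K) →ₗ[K] ι → κ → K :=
  LinearMap.pi fun i => LinearMap.pi fun c => (dotProductBilin K K).flip (u i c)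

theorem dotProductCode_restrict_injective (u : ∀ i, Module.Basis κ K (U i)) {J : Finset ι}
    (hJ : J.sup U = ⊤) :
    Function.Injective fun x (j : J) => dotProductCode u x j := by
  intro x y hxy
  suffices J.sup U ≤ LinearMap.eqLocus (dotProductBilin K K x) (dotProductBilin K K y) from
    dotProduct_eq x y fun w => this (hJ ▸ Submodule.mem_top)
  refine Finset.sup_le fun j hj w hw => ?_
  have hU : dotProductBilin K K x ∘ₗ (U j).subtype = dotProductBilin K K y ∘ₗ (U j).subtype :=
    (u j).ext fun c => congrFun (congrFun hxy ⟨j, hj⟩) c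
  exact LinearMap.congr_fun hU ⟨w, hw⟩

end

theorem stmt14_general (b k n : ℕ) (hkn : k ≤ n) (Fq : Type*) [Field Fq]
    (U : Fin n → Submodule Fq (Fin b → Fq))
    (hdim : ∀ i, Module.finrank Fq (U i) = b / k)
    (hind : ∀ T : Finset (Fin n), T.card = k →
      Module.finrank Fq ↥(T.sup U) = b) :
    ∃ f : (Fin b → Fq) →ₗ[Fq] (Fin n → (Fin (b / k) → Fq)),
      Function.Injective f ∧
      ∀ J : Finset (Fin n), J.card = k →
        Function.Injective
          (fun x : Fin b → Fq => fun j : {j : Fin n // j ∈ J} => f x j.1) := by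
  let u i := Module.finBasisOfFinrankEq Fq (U i) (hdim i)
  have hsup (J : Finset (Fin n)) (hJ : J.card = k) : J.sup U = ⊤ :=
    Submodule.eq_top_of_finrank_eq (by rw [hind J hJ, Module.finrank_fin_fun])
  obtain ⟨J₀, -, hJ₀⟩ :=
    Finset.exists_subset_card_eq (s := (Finset.univ : Finset (Fin n))) (by simpa using hkn)
  refine ⟨dotProductCode u, ?_, fun J hJ => dotProductCode_restrict_injective u (hsup J hJ)⟩
  exact fun x y hxy => dotProductCode_restrict_injective u (hsup J₀ hJ₀)
    (congrArg (fun F (j : J₀) => F j) hxy)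

theorem stmt14 (q b k n : ℕ) (hq : IsPrimePow q) (hb : 0 < b) (hk : 0 < k)
    (hn : 0 < n) (hkb : k ∣ b) (hkn : k ≤ n)
    (Fq : Type*) [Field Fq] [Fintype Fq] (hF : Fintype.card Fq = q)
    (U : Fin n → Submodule Fq (Fin b → Fq))
    (hdim : ∀ i, Module.finrank Fq (U i) = b / k)
    (hind : ∀ T : Finset (Fin n), T.card = k →
      Module.finrank Fq ↥(T.sup U) = b) :
    ∃ f : (Fin b → Fq) →ₗ[Fq] (Fin n → (Fin (b / k) → Fq)),
      Function.Injective f ∧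
      ∀ J : Finset (Fin n), J.card = k →
        Function.Injective
          (fun x : Fin b → Fq => fun j : {j : Fin n // j ∈ J} => f x j.1) :=
  stmt14_general b k n hkn Fq U hdim hind
end
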